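/- For Y ~ N(θ, 1) truncated to |Y| ≥ c (with c > 0), the map θ ↦ E_θ[X] is strictly increasing in θ, where E_θ[X] = θ + (φ(c-θ) - φ(-c-θ))/Q_c(θ) and Q_c(θ) = Φ(θ-c) + Φ(-θ-c). -/

import Mathlib

/-!
In the coordinate `x = y - θ` the truncated law has density `φ` on
`S = (-∞, -c - θ] ∪ (c - θ, ∞)`, normalised by `Q_c(θ) = ∫_S φ`, and the moments `∫_S x φ` and
`∫_S x² φ` have closed forms in `φ` and `Φ` (integrate `x φ = -φ'` and `x² φ = φ - (x φ)'`).
Differentiating the closed form of `E_θ[X]` gives exactly the variance of the truncated law,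
`(Q ∫_S x² φ - (∫_S x φ)²) / Q²`, which is positive since `S` is not a null set.
-/

open MeasureTheory Set

noncomputable def phi (x : ℝ) : ℝ := (Real.sqrt (2 * Real.pi))⁻¹ * Real.exp (-x ^ 2 / 2)

noncomputable def Phi (x : ℝ) : ℝ := ∫ t in Iic x, phi t

/-- `Q_c(θ) = Φ(θ-c) + Φ(-θ-c) = P(|N(θ,1)| ≥ c)`. -/
noncomputable def Qc (c θ : ℝ) : ℝ := Phi (θ - c) + Phi (-θ - c)

section ImproperFTC

variable {f f' : ℝ → ℝ}

theorem integral_Ioi_of_hasDerivAt_of_integrable (hderiv : ∀ x, HasDerivAt f (f' x) x)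
    (hf : Integrable f) (hf' : Integrable f') (a : ℝ) : ∫ x in Ioi a, f' x = -f a := by
  have hlim := tendsto_zero_of_hasDerivAt_of_integrableOn_Ioi (a := a)
    (fun x _ => hderiv x) hf'.integrableOn hf.integrableOn
  rw [integral_Ioi_of_hasDerivAt_of_tendsto' (fun x _ => hderiv x) hf'.integrableOn hlim,
    zero_sub]

theorem integral_Iic_of_hasDerivAt_of_integrable (hderiv : ∀ x, HasDerivAt f (f' x) x)
    (hf : Integrable f) (hf' : Integrable f') (b : ℝ) : ∫ x in Iic b, f' x = f b := by
  have hlim := tendsto_zero_of_hasDerivAt_of_integrableOn_Iic (a := b)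
    (fun x _ => hderiv x) hf'.integrableOn hf.integrableOn
  rw [integral_Iic_of_hasDerivAt_of_tendsto' (fun x _ => hderiv x) hf'.integrableOn hlim,
    sub_zero]

end ImproperFTC

lemma phi_pos (x : ℝ) : 0 < phi x := by
  unfold phi; positivity

lemma phi_neg (x : ℝ) : phi (-x) = phi x := by simp [phi]

lemma continuous_phi : Continuous phi := by
  unfold phi; fun_prop

lemma hasDerivAt_phi (x : ℝ) : HasDerivAt phi (-x * phi x) x := by
  have h : HasDerivAt (fun y : ℝ => -y ^ 2 / 2) (-x) x :=
    ((hasDerivAt_pow 2 x).neg.div_const 2).congr_deriv (by ring)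
  exact (h.exp.const_mul _).congr_deriv (by rw [phi]; ring)

lemma hasDerivAt_mul_phi (x : ℝ) :
    HasDerivAt (fun x => x * phi x) (phi x - x ^ 2 * phi x) x :=
  ((hasDerivAt_id x).mul (hasDerivAt_phi x)).congr_deriv (by simp only [id_eq, one_mul]; ring)

lemma integrable_pow_mul_phi (n : ℕ) : Integrable fun x => x ^ n * phi x := by
  have h := (integrable_rpow_mul_exp_neg_mul_sq (b := 1 / 2) (by norm_num)
    (s := n) (by linarith [n.cast_nonneg (α := ℝ)])).const_mul (Real.sqrt (2 * Real.pi))⁻¹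
  refine h.congr (ae_of_all _ fun x => ?_)
  simp only [Real.rpow_natCast, phi]
  ring_nf

lemma integrable_phi : Integrable phi := by
  simpa using integrable_pow_mul_phi 0

lemma integrable_mul_phi : Integrable fun x => x * phi x := by
  simpa using integrable_pow_mul_phi 1

lemma integrable_sq_mul_phi : Integrable fun x => x ^ 2 * phi x :=
  integrable_pow_mul_phi 2

lemma hasDerivAt_Phi (x : ℝ) : HasDerivAt Phi (phi x) x := by
  have hPhi : Phi = fun u => Phi 0 + ∫ t in (0 : ℝ)..u, phi t := by
    funext u
    rw [← intervalIntegral.integral_Iic_sub_Iic integrable_phi.integrableOn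
      integrable_phi.integrableOn]
    unfold Phi; ring
  rw [hPhi]
  exact ((intervalIntegral.integral_hasStrictDerivAt_right
    integrable_phi.intervalIntegrable (continuous_phi.stronglyMeasurableAtFilter _ _)
    continuous_phi.continuousAt).hasDerivAt.const_add _)

lemma setIntegral_phi_pos {S : Set ℝ} (hS : 0 < volume S) : 0 < ∫ x in S, phi x := by
  refine (setIntegral_pos_iff_support_of_nonneg_ae
    (ae_of_all _ fun x => (phi_pos x).le) integrable_phi.integrableOn).2 ?_
  rwa [Function.support_eq_univ fun x => (phi_pos x).ne', univ_inter]

lemma Phi_pos (x : ℝ) : 0 < Phi x :=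
  setIntegral_phi_pos (by simp)

lemma integral_Ioi_phi (a : ℝ) : ∫ x in Ioi a, phi x = Phi (-a) := by
  rw [← neg_neg a, ← integral_comp_neg_Iic, neg_neg]
  simp only [phi_neg]
  rfl

lemma integral_Ioi_mul_phi (a : ℝ) : ∫ x in Ioi a, x * phi x = phi a := by
  rw [integral_Ioi_of_hasDerivAt_of_integrable (f := fun x => -phi x)
    (fun x => (hasDerivAt_phi x).neg.congr_deriv (by ring)) integrable_phi.neg
    integrable_mul_phi, neg_neg]

lemma integral_Iic_mul_phi (b : ℝ) : ∫ x in Iic b, x * phi x = -phi b :=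
  integral_Iic_of_hasDerivAt_of_integrable (f := fun x => -phi x)
    (fun x => (hasDerivAt_phi x).neg.congr_deriv (by ring)) integrable_phi.neg
    integrable_mul_phi b

-- `x² φ = φ - (x φ)'`, integrated by the improper fundamental theorem of calculus.
lemma integral_Ioi_sq_mul_phi (a : ℝ) :
    ∫ x in Ioi a, x ^ 2 * phi x = Phi (-a) + a * phi a := by
  have h := integral_Ioi_of_hasDerivAt_of_integrable hasDerivAt_mul_phi integrable_mul_phi
    (integrable_phi.sub integrable_sq_mul_phi) a
  rw [integral_sub integrable_phi.integrableOn integrable_sq_mul_phi.integrableOn,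
    integral_Ioi_phi] at h
  linarith

lemma integral_Iic_sq_mul_phi (b : ℝ) :
    ∫ x in Iic b, x ^ 2 * phi x = Phi b - b * phi b := by
  have h := integral_Iic_of_hasDerivAt_of_integrable hasDerivAt_mul_phi integrable_mul_phi
    (integrable_phi.sub integrable_sq_mul_phi) b
  rw [integral_sub integrable_phi.integrableOn integrable_sq_mul_phi.integrableOn] at h
  unfold Phi
  linarith

-- `(Q x - M)² φ` integrates to `Q (Q V - M²)`; it is positive since `S` is not a null set.
lemma sq_setIntegral_mul_phi_lt {S : Set ℝ} (hS : 0 < volume S) :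
    (∫ x in S, x * phi x) ^ 2 < (∫ x in S, phi x) * ∫ x in S, x ^ 2 * phi x := by
  set Q := ∫ x in S, phi x
  set M := ∫ x in S, x * phi x
  set V := ∫ x in S, x ^ 2 * phi x
  have hQ : 0 < Q := setIntegral_phi_pos hS
  have hsq : (fun x => (Q * x - M) ^ 2 * phi x) =
      fun x => Q ^ 2 * (x ^ 2 * phi x) - 2 * Q * M * (x * phi x) + M ^ 2 * phi x := by
    funext x; ring
  have h2 : Integrable fun x => Q ^ 2 * (x ^ 2 * phi x) := integrable_sq_mul_phi.const_mul _
  have h1 : Integrable fun x => 2 * Q * M * (x * phi x) := integrable_mul_phi.const_mul _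
  have h0 : Integrable fun x => M ^ 2 * phi x := integrable_phi.const_mul _
  have hint : Integrable fun x => (Q * x - M) ^ 2 * phi x := by
    rw [hsq]; exact (h2.sub h1).add h0
  have hexpand : ∫ x in S, (Q * x - M) ^ 2 * phi x = Q * (Q * V - M ^ 2) := by
    rw [hsq, integral_add (by exact (h2.sub h1).integrableOn) h0.integrableOn,
      integral_sub h2.integrableOn h1.integrableOn, integral_const_mul, integral_const_mul,
      integral_const_mul]
    ring
  have hpos : 0 < ∫ x in S, (Q * x - M) ^ 2 * phi x := by
    refine (setIntegral_pos_iff_support_of_nonneg_ae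
      (ae_of_all _ fun x => by positivity [phi_pos x]) hint.integrableOn).2 ?_
    have hsupp : S \ {M / Q} ⊆ Function.support (fun x => (Q * x - M) ^ 2 * phi x) ∩ S := by
      intro x ⟨hxS, hx⟩
      refine ⟨mul_ne_zero (pow_ne_zero _ fun h => hx ?_) (phi_pos x).ne', hxS⟩
      rw [mem_singleton_iff, eq_div_iff hQ.ne']
      linarith
    calc 0 < volume S := hS
      _ = volume (S \ {M / Q}) := (measure_sdiff_null (measure_singleton _)).symm
      _ ≤ _ := measure_mono hsupp
  rw [hexpand] at hpos
  nlinarith [pos_of_mul_pos_right hpos hQ.le]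

lemma setIntegral_Iic_union_Ioi {g : ℝ → ℝ} (hg : Integrable g) {a b : ℝ} (hba : b ≤ a) :
    ∫ x in Iic b ∪ Ioi a, g x = (∫ x in Iic b, g x) + ∫ x in Ioi a, g x :=
  setIntegral_union (Iic_disjoint_Ioi hba) measurableSet_Ioi hg.integrableOn hg.integrableOn

-- The variance of the standard normal law conditioned on the complement of `(b, a]` is positive.
lemma sq_phi_sub_phi_lt {a b : ℝ} (hba : b ≤ a) :
    (phi a - phi b) ^ 2 < (Phi (-a) + Phi b) * (Phi (-a) + Phi b + a * phi a - b * phi b) := by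
  have hS : 0 < volume (Iic b ∪ Ioi a) := by
    calc (0 : ENNReal) < volume (Ioi a) := by simp
      _ ≤ _ := measure_mono subset_union_right
  have h := sq_setIntegral_mul_phi_lt hS
  have hPhi : ∫ x in Iic b, phi x = Phi b := rfl
  rw [setIntegral_Iic_union_Ioi integrable_phi hba,
    setIntegral_Iic_union_Ioi integrable_mul_phi hba,
    setIntegral_Iic_union_Ioi integrable_sq_mul_phi hba, integral_Ioi_phi, integral_Ioi_mul_phi,
    integral_Iic_mul_phi, integral_Ioi_sq_mul_phi, integral_Iic_sq_mul_phi, hPhi] at h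
  convert h using 1 <;> ring

lemma Qc_eq (c θ : ℝ) : Qc c θ = Phi (-(c - θ)) + Phi (-c - θ) := by
  rw [Qc, neg_sub, show -θ - c = -c - θ by ring]

lemma Qc_pos (c θ : ℝ) : 0 < Qc c θ :=
  add_pos (Phi_pos _) (Phi_pos _)

lemma hasDerivAt_phi_const_sub (k θ : ℝ) :
    HasDerivAt (fun θ => phi (k - θ)) ((k - θ) * phi (k - θ)) θ :=
  ((hasDerivAt_phi (k - θ)).comp θ ((hasDerivAt_id θ).const_sub k)).congr_deriv
    (by simp only [neg_sub, mul_neg, mul_one]; ring)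

lemma hasDerivAt_Qc (c θ : ℝ) : HasDerivAt (Qc c) (phi (c - θ) - phi (-c - θ)) θ := by
  have h := ((hasDerivAt_Phi (θ - c)).comp θ ((hasDerivAt_id θ).sub_const c)).add
    ((hasDerivAt_Phi (-θ - c)).comp θ ((hasDerivAt_id θ).neg.sub_const c))
  refine h.congr_deriv ?_
  rw [← phi_neg (θ - c), neg_sub, show -θ - c = -c - θ by ring]
  simp only [mul_one, mul_neg]; ring

/-- the truncated-normal conditional mean
`θ ↦ E_θ[X] = θ + (φ(c-θ) - φ(-c-θ))/Q_c(θ)` is strictly increasing in `θ`. -/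
theorem truncated_normal_mean_strictMono (c : ℝ) (hc : 0 < c) :
    StrictMono (fun θ : ℝ => θ + (phi (c - θ) - phi (-c - θ)) / Qc c θ) := by
  refine strictMono_of_hasDerivAt_pos (fun θ => (hasDerivAt_id θ).add
    (((hasDerivAt_phi_const_sub c θ).sub (hasDerivAt_phi_const_sub (-c) θ)).div
      (hasDerivAt_Qc c θ) (Qc_pos c θ).ne')) fun θ => ?_
  have hQ := Qc_pos c θ
  have hvar := sq_phi_sub_phi_lt (a := c - θ) (b := -c - θ) (by linarith)
  rw [← Qc_eq] at hvar
  rw [Pi.sub_apply, one_add_div (pow_pos hQ 2).ne']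
  exact div_pos (by nlinarith) (pow_pos hQ 2)
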